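/- Let γ ∈ [0, 1) and r̄ ≥ 0 be real numbers. Let ι be a finite index set, let w : ι → ℝ satisfy w(i) ≥ 0 for all i and ∑_{i ∈ ι} w(i) = 1, let r : ℕ → ℝ satisfy 0 ≤ r(t) ≤ r̄ for all t, and for each i ∈ ι let r_i : ℕ → ℝ satisfy 0 ≤ r_i(t) ≤ r̄ for all t and r_i(0) = r(0). Then |∑_{i ∈ ι} w(i) · (∑_{t=0}^∞ γ^t · r_i(t)) − ∑_{t=0}^∞ γ^t · r(t)| ≤ 2 · r̄ · γ / (1 − γ). -/

import Mathlib

/-!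
Every return whose first reward is `r 0` lies in `[r 0, r 0 + r̄ γ / (1 - γ)]`: the first term is
`r 0`, and the tail is a nonnegative sum dominated by `r̄ ∑_{t ≥ 1} γ^t`. This interval is
convex, so it also contains the weighted average of the returns `Q(rᵢ)`, and two points of it are
at most `r̄ γ / (1 - γ)` apart.
-/

open Set

noncomputable def discountedReturn (γ : ℝ) (s : ℕ → ℝ) : ℝ := ∑' t, γ ^ t * s t

section DiscountedReturn

variable {γ b : ℝ} {s : ℕ → ℝ}

theorem summable_discounted (hγ0 : 0 ≤ γ) (hγ1 : γ < 1) (hs0 : ∀ t, 0 ≤ s t)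
    (hs1 : ∀ t, s t ≤ b) : Summable fun t ↦ γ ^ t * s t :=
  ((summable_geometric_of_lt_one hγ0 hγ1).mul_right b).of_nonneg_of_le
    (fun t ↦ mul_nonneg (pow_nonneg hγ0 t) (hs0 t))
    (fun t ↦ mul_le_mul_of_nonneg_left (hs1 t) (pow_nonneg hγ0 t))

theorem discountedReturn_nonneg (hγ0 : 0 ≤ γ) (hs0 : ∀ t, 0 ≤ s t) :
    0 ≤ discountedReturn γ s :=
  tsum_nonneg fun t ↦ mul_nonneg (pow_nonneg hγ0 t) (hs0 t)

theorem discountedReturn_le (hγ0 : 0 ≤ γ) (hγ1 : γ < 1) (hs0 : ∀ t, 0 ≤ s t)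
    (hs1 : ∀ t, s t ≤ b) : discountedReturn γ s ≤ b / (1 - γ) := by
  calc discountedReturn γ s ≤ ∑' t, γ ^ t * b :=
        (summable_discounted hγ0 hγ1 hs0 hs1).tsum_le_tsum
          (fun t ↦ mul_le_mul_of_nonneg_left (hs1 t) (pow_nonneg hγ0 t))
          ((summable_geometric_of_lt_one hγ0 hγ1).mul_right b)
    _ = b / (1 - γ) := by
        rw [tsum_mul_right, tsum_geometric_of_lt_one hγ0 hγ1, div_eq_inv_mul]

theorem discountedReturn_eq_head_add (hs : Summable fun t ↦ γ ^ t * s t) :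
    discountedReturn γ s = s 0 + γ * discountedReturn γ (fun t ↦ s (t + 1)) := by
  rw [discountedReturn, hs.tsum_eq_zero_add, discountedReturn, ← tsum_mul_left]
  simp only [pow_zero, one_mul, pow_succ', mul_assoc]

theorem discountedReturn_mem_Icc (hγ0 : 0 ≤ γ) (hγ1 : γ < 1) (hs0 : ∀ t, 0 ≤ s t)
    (hs1 : ∀ t, s t ≤ b) : discountedReturn γ s ∈ Icc (s 0) (s 0 + b * γ / (1 - γ)) := by
  have htail_nonneg := discountedReturn_nonneg hγ0 fun t ↦ hs0 (t + 1)
  have htail_le := discountedReturn_le hγ0 hγ1 (fun t ↦ hs0 (t + 1)) fun t ↦ hs1 (t + 1)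
  rw [discountedReturn_eq_head_add (summable_discounted hγ0 hγ1 hs0 hs1)]
  refine ⟨le_add_of_nonneg_right (mul_nonneg hγ0 htail_nonneg), add_le_add_right ?_ _⟩
  calc γ * discountedReturn γ (fun t ↦ s (t + 1)) ≤ γ * (b / (1 - γ)) :=
        mul_le_mul_of_nonneg_left htail_le hγ0
    _ = b * γ / (1 - γ) := by ring

end DiscountedReturn

theorem approx_Q_error_bound_general
    (γ rbar : ℝ) (hγ0 : 0 ≤ γ) (hγ1 : γ < 1)
    {ι : Type*} [Fintype ι] (w : ι → ℝ) (hw0 : ∀ i, 0 ≤ w i)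
    (hw1 : ∑ i, w i = 1)
    (r : ℕ → ℝ) (hr0 : ∀ t, 0 ≤ r t) (hr1 : ∀ t, r t ≤ rbar)
    (ri : ι → ℕ → ℝ)
    (hri0 : ∀ i t, 0 ≤ ri i t) (hri1 : ∀ i t, ri i t ≤ rbar)
    (hinit : ∀ i, ri i 0 = r 0) :
    |(∑ i, w i * ∑' t : ℕ, γ ^ t * ri i t) - ∑' t : ℕ, γ ^ t * r t|
      ≤ 2 * rbar * γ / (1 - γ) := by
  set C := rbar * γ / (1 - γ)
  have hC : 0 ≤ C := div_nonneg (mul_nonneg ((hr0 0).trans (hr1 0)) hγ0) (by linarith)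
  have hQr : discountedReturn γ r ∈ Icc (r 0) (r 0 + C) :=
    discountedReturn_mem_Icc hγ0 hγ1 hr0 hr1
  have hQri (i : ι) : discountedReturn γ (ri i) ∈ Icc (r 0) (r 0 + C) := by
    simpa only [hinit i] using discountedReturn_mem_Icc hγ0 hγ1 (hri0 i) (hri1 i)
  have hQavg : ∑ i, w i * discountedReturn γ (ri i) ∈ Icc (r 0) (r 0 + C) :=
    (convex_Icc _ _).sum_mem (fun i _ ↦ hw0 i) hw1 fun i _ ↦ hQri i
  calc _ ≤ r 0 + C - r 0 := Real.dist_le_of_mem_Icc hQavg hQr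
    _ ≤ 2 * rbar * γ / (1 - γ) := by rw [mul_assoc, mul_div_assoc]; linarith

/-- Lemma 1: the approximated Q function, a convex combination of discounted
returns of reward trajectories agreeing with the true trajectory at time `0`,
differs from the true discounted return by at most `2 * r̄ * γ / (1 - γ)`. -/
theorem approx_Q_error_bound
    (γ rbar : ℝ) (hγ0 : 0 ≤ γ) (hγ1 : γ < 1) (hrbar : 0 ≤ rbar)
    {ι : Type*} [Fintype ι] (w : ι → ℝ) (hw0 : ∀ i, 0 ≤ w i)
    (hw1 : ∑ i, w i = 1)
    (r : ℕ → ℝ) (hr0 : ∀ t, 0 ≤ r t) (hr1 : ∀ t, r t ≤ rbar)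
    (ri : ι → ℕ → ℝ)
    (hri0 : ∀ i t, 0 ≤ ri i t) (hri1 : ∀ i t, ri i t ≤ rbar)
    (hinit : ∀ i, ri i 0 = r 0) :
    |(∑ i, w i * ∑' t : ℕ, γ ^ t * ri i t) - ∑' t : ℕ, γ ^ t * r t|
      ≤ 2 * rbar * γ / (1 - γ) :=
  approx_Q_error_bound_general γ rbar hγ0 hγ1 w hw0 hw1 r hr0 hr1 ri hri0 hri1 hinit
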